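/- The Klein–Gordon stress-energy tensor is divergence-free on-shell: if φ : ℝ⁴ → ℝ is smooth and solves the mass-m Klein–Gordon equation, then its stress-energy tensor T[φ,m] satisfies Σₐ E a a * ∂T[φ,m] a b/∂p a (p) = 0 for every p ∈ ℝ⁴ and every index b. -/

import Mathlib

open Matrix MeasureTheory Filter Topology

noncomputable section

abbrev Vec4 : Type := Fin 4 → ℝ
abbrev Mat4 : Type := Matrix (Fin 4) (Fin 4) ℝ

/-- The Minkowski inner product on ℝ⁴. -/
def mink (x y : Vec4) : ℝ := x 0 * y 0 - x 1 * y 1 - x 2 * y 2 - x 3 * y 3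

/-- The matrix diag(1,-1,-1,-1). -/
def E : Mat4 := Matrix.diagonal ![1, -1, -1, -1]

def FutureCausal (x : Vec4) : Prop := 0 ≤ mink x x ∧ 0 ≤ x 0
def FutureTimelike (x : Vec4) : Prop := 0 < mink x x ∧ 0 < x 0
def FutureNull (x : Vec4) : Prop := x ≠ 0 ∧ mink x x = 0 ∧ 0 < x 0
def UnitTimelike (x : Vec4) : Prop := FutureTimelike x ∧ mink x x = 1

/-- The dominant energy condition for a matrix. -/
def DEC (T : Mat4) : Prop :=
  ∀ ξ ζ : Vec4, FutureCausal ξ → FutureCausal ζ → 0 ≤ ∑ i, ∑ j, ξ i * T i j * ζ j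

/-- ⟨T, x⟩ = Σᵢⱼ T i j * x i j. -/
def minner (T x : Mat4) : ℝ := ∑ i, ∑ j, T i j * x i j

/-- The cone D of finite sums of symmetrized products of future causal vectors. -/
def coneD : Set Mat4 :=
  { x | ∃ (n : ℕ) (ξ ζ : Fin n → Vec4),
      (∀ k, FutureCausal (ξ k)) ∧ (∀ k, FutureCausal (ζ k)) ∧
      x = ∑ k, (1/2 : ℝ) • (vecMulVec (ξ k) (ζ k) + vecMulVec (ζ k) (ξ k)) }

/-- A symmetric matrix is generic if it lies in the interior of D, taken within
the space of symmetric matrices. -/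
def Generic (x : Mat4) : Prop :=
  ∃ h : xᵀ = x, (⟨x, h⟩ : { A : Mat4 // Aᵀ = A }) ∈
    interior { A : { A : Mat4 // Aᵀ = A } | A.val ∈ coneD }

/-- Partial derivative in the a-th coordinate direction. -/
def pd (a : Fin 4) (f : Vec4 → ℝ) (p : Vec4) : ℝ := fderiv ℝ f p (Pi.single a 1)

def SmoothMatField (T : Vec4 → Mat4) : Prop := ∀ a b, ContDiff ℝ (⊤ : ℕ∞) fun p => T p a b
def SymValued (T : Vec4 → Mat4) : Prop := ∀ p, (T p)ᵀ = T p
def DivFree (T : Vec4 → Mat4) : Prop := ∀ p b, ∑ a, pd a (fun q => T q a b) p = 0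

/-- A collection of fields tracks a curve. -/
def Tracks (C : Set (Vec4 → Mat4)) (γ : ℝ → Vec4) : Prop :=
  ∀ x : Vec4 → Mat4, SmoothMatField x → HasCompactSupport x → SymValued x →
    (∃ O : Set Vec4, IsOpen O ∧ Set.range γ ⊆ O ∧ ∀ p ∈ O, x p ∈ coneD) →
    (∃ t₀ : ℝ, Generic (x (γ t₀))) →
    ∃ T ∈ C, 0 < ∫ p, minner (T p) (x p)

/-- Maxwell stress-energy tensor of a field strength matrix. -/
def maxwellT (F : Mat4) : Mat4 :=
  F * E * F - ((1/4 : ℝ) * (E * F * E * F).trace) • E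

/-- Source-free Maxwell equations. -/
def SolvesMaxwell (F : Vec4 → Mat4) : Prop :=
  (∀ p b, ∑ a, E a a * pd a (fun q => F q a b) p = 0) ∧
  (∀ p a b c, pd a (fun q => F q b c) p + pd b (fun q => F q c a) p
      + pd c (fun q => F q a b) p = 0)

/-- Klein–Gordon stress-energy tensor. -/
def kgT (φ : Vec4 → ℝ) (m : ℝ) (p : Vec4) : Mat4 :=
  Matrix.of fun a b =>
    pd a φ p * pd b φ p
      - (1/2 : ℝ) * E a b * ((∑ c, E c c * (pd c φ p)^2) - m^2 * (φ p)^2)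

/-- Mass-m Klein–Gordon equation. -/
def SolvesKG (φ : Vec4 → ℝ) (m : ℝ) : Prop :=
  ∀ p, pd 0 (pd 0 φ) p - pd 1 (pd 1 φ) p - pd 2 (pd 2 φ) p - pd 3 (pd 3 φ) p
    + m^2 * φ p = 0


lemma pd_smooth' {f : Vec4 → ℝ} (hf : ContDiff ℝ (⊤ : ℕ∞) f) (a : Fin 4) : ContDiff ℝ (⊤ : ℕ∞) (pd a f) :=
  (hf.fderiv_right (by simp)).clm_apply contDiff_const

lemma pd_mul' {f g : Vec4 → ℝ} {p : Vec4} (hf : DifferentiableAt ℝ f p)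
    (hg : DifferentiableAt ℝ g p) (a : Fin 4) :
    pd a (fun q => f q * g q) p = pd a f p * g p + f p * pd a g p := by
  simp only [pd, fderiv_fun_mul hf hg]; simp; ring

lemma pd_sub' {f g : Vec4 → ℝ} {p : Vec4} (hf : DifferentiableAt ℝ f p)
    (hg : DifferentiableAt ℝ g p) (a : Fin 4) :
    pd a (fun q => f q - g q) p = pd a f p - pd a g p := by
  simp only [pd, fderiv_fun_sub hf hg]; simp

lemma pd_const_mul' {f : Vec4 → ℝ} {p : Vec4} (hf : DifferentiableAt ℝ f p) (c : ℝ) (a : Fin 4) :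
    pd a (fun q => c * f q) p = c * pd a f p := by
  simp only [pd, fderiv_const_mul hf c]; simp

lemma pd_comm' {f : Vec4 → ℝ} (hf : ContDiff ℝ (⊤ : ℕ∞) f) (a b : Fin 4) (p : Vec4) :
    pd a (pd b f) p = pd b (pd a f) p := by
  have h : IsSymmSndFDerivAt ℝ f p := hf.contDiffAt.isSymmSndFDerivAt (by rw [minSmoothness_of_isRCLikeNormedField]; exact WithTop.coe_le_coe.mpr (le_top : (2 : ℕ∞) ≤ ⊤))
  have hd : DifferentiableAt ℝ (fderiv ℝ f) p :=
    ((hf.fderiv_right (m := (⊤ : ℕ∞)) ((by simp))).differentiable (by simp)) p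
  have e : ∀ (u v : Fin 4), pd u (pd v f) p
      = fderiv ℝ (fderiv ℝ f) p (Pi.single u 1) (Pi.single v 1) := by
    intro u v
    have h1 : pd v f = fun q => (fderiv ℝ f q) (Pi.single v 1) := rfl
    simp only [pd, h1, fderiv_clm_apply hd (differentiableAt_const (Pi.single v 1))]
    simp
  rw [e, e, h]

lemma kgT_pd_formula (φ : Vec4 → ℝ) (m : ℝ) (hφ : ContDiff ℝ (⊤ : ℕ∞) φ) (a b : Fin 4) (p : Vec4) :
    pd a (fun q => kgT φ m q a b) p =
      pd a (pd a φ) p * pd b φ p + pd a φ p * pd a (pd b φ) p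
      - (1/2 * E a b) *
        ((pd a (pd 0 φ) p * pd 0 φ p + pd 0 φ p * pd a (pd 0 φ) p
          - (pd a (pd 1 φ) p * pd 1 φ p + pd 1 φ p * pd a (pd 1 φ) p)
          - (pd a (pd 2 φ) p * pd 2 φ p + pd 2 φ p * pd a (pd 2 φ) p)
          - (pd a (pd 3 φ) p * pd 3 φ p + pd 3 φ p * pd a (pd 3 φ) p))
          - m^2 * (pd a φ p * φ p + φ p * pd a φ p)) := by
  have hD : ∀ c : Fin 4, DifferentiableAt ℝ (pd c φ) p :=
    fun c => ((pd_smooth' hφ c).differentiable (by simp)) p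
  have hφd : DifferentiableAt ℝ φ p := hφ.differentiable (by simp) p
  have hfun : (fun q => kgT φ m q a b) = fun q =>
      pd a φ q * pd b φ q - (1/2 * E a b) *
        ((pd 0 φ q * pd 0 φ q - pd 1 φ q * pd 1 φ q - pd 2 φ q * pd 2 φ q
          - pd 3 φ q * pd 3 φ q) - m^2 * (φ q * φ q)) := by
    funext q
    simp only [kgT, Matrix.of_apply, Fin.sum_univ_four, E, Matrix.diagonal]
    norm_num [Matrix.cons_val_zero, Matrix.cons_val_one, Matrix.head_cons, Matrix.cons_val_two, Matrix.cons_val_three]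
    ring_nf
  have h01 : DifferentiableAt ℝ (fun q => pd 0 φ q * pd 0 φ q - pd 1 φ q * pd 1 φ q) p :=
    ((hD 0).mul (hD 0)).sub ((hD 1).mul (hD 1))
  have h02 : DifferentiableAt ℝ
      (fun q => pd 0 φ q * pd 0 φ q - pd 1 φ q * pd 1 φ q - pd 2 φ q * pd 2 φ q) p :=
    h01.sub ((hD 2).mul (hD 2))
  have h03 : DifferentiableAt ℝ (fun q => pd 0 φ q * pd 0 φ q - pd 1 φ q * pd 1 φ q
      - pd 2 φ q * pd 2 φ q - pd 3 φ q * pd 3 φ q) p := h02.sub ((hD 3).mul (hD 3))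
  have hm : DifferentiableAt ℝ (fun q => m^2 * (φ q * φ q)) p := (hφd.mul hφd).const_mul _
  rw [hfun, pd_sub' ((hD a).fun_mul (hD b)) ((h03.fun_sub hm).const_mul _),
    pd_mul' (hD a) (hD b), pd_const_mul' (h03.fun_sub hm),
    pd_sub' h03 hm, pd_sub' h02 ((hD 3).fun_mul (hD 3)), pd_sub' h01 ((hD 2).fun_mul (hD 2)),
    pd_sub' ((hD 0).fun_mul (hD 0)) ((hD 1).fun_mul (hD 1)),
    pd_mul' (hD 0) (hD 0), pd_mul' (hD 1) (hD 1), pd_mul' (hD 2) (hD 2),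
    pd_mul' (hD 3) (hD 3), pd_const_mul' (hφd.fun_mul hφd), pd_mul' hφd hφd]

lemma E_diag_mul (f : Fin 4 → ℝ) (b : Fin 4) : ∑ a, E a a * E a b * f a = f b := by
  fin_cases b <;>
    · simp only [Fin.sum_univ_four, E, Matrix.diagonal_apply, Fin.ext_iff,
        show ((0:Fin 4):ℕ) = 0 from rfl, show ((1:Fin 4):ℕ) = 1 from rfl,
        show ((2:Fin 4):ℕ) = 2 from rfl, show ((3:Fin 4):ℕ) = 3 from rfl, Matrix.cons_val]
      norm_num
      try rfl

lemma E00 : E 0 0 = 1 := by norm_num [E, Matrix.diagonal_apply]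
lemma E11 : E 1 1 = -1 := by norm_num [E, Matrix.diagonal_apply]
lemma E22 : E 2 2 = -1 := by norm_num [E, Matrix.diagonal_apply, Matrix.cons_val_two]
lemma E33 : E 3 3 = -1 := by norm_num [E, Matrix.diagonal_apply, Matrix.cons_val_three]

/-- The Klein–Gordon stress-energy tensor is divergence-free on-shell. -/
theorem kgT_divergence_free (φ : Vec4 → ℝ) (m : ℝ)
    (hφ : ContDiff ℝ (⊤ : ℕ∞) φ) (hkg : SolvesKG φ m) :
    ∀ (p : Vec4) (b : Fin 4),
      ∑ a, E a a * pd a (fun q => kgT φ m q a b) p = 0 := by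
  intro p b
  have hcomm := fun a c => pd_comm' hφ a c p
  have hkgp := hkg p
  have hY := E_diag_mul (fun a =>
      pd a (pd 0 φ) p * pd 0 φ p + pd 0 φ p * pd a (pd 0 φ) p
        - (pd a (pd 1 φ) p * pd 1 φ p + pd 1 φ p * pd a (pd 1 φ) p)
        - (pd a (pd 2 φ) p * pd 2 φ p + pd 2 φ p * pd a (pd 2 φ) p)
        - (pd a (pd 3 φ) p * pd 3 φ p + pd 3 φ p * pd a (pd 3 φ) p)
        - m^2 * (pd a φ p * φ p + φ p * pd a φ p)) b
  simp only [Fin.sum_univ_four, E00, E11, E22, E33] at hY ⊢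
  simp only [kgT_pd_formula φ m hφ]
  linear_combination (pd b φ p) * hkgp
    + (pd 0 φ p) * hcomm 0 b - (pd 1 φ p) * hcomm 1 b
    - (pd 2 φ p) * hcomm 2 b - (pd 3 φ p) * hcomm 3 b
    - (1/2) * hY
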